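/- arXiv:1208.0919 — 4 statements merged into one kernel-verified Lean document; each statement's English description precedes it below -/
import Mathlib

section
/- For any real z ≥ 2 and any positive integer N, writing R(N) = N/φ(N) and R_z(N) = ∏_{p | N, p ≤ z} (1 − 1/p)⁻¹, one has ∑_{N ≤ x} (R(N) − R_z(N)) ≪ x/z for all x ≥ 2, with an absolute implied constant. -/
/-!
Since `(1 - 1/p)⁻¹ = 1 + 1/(p-1)`, expanding the Euler products writes `R(N) - R_z(N)` as the sum
of `∏_{p ∈ t} 1/(p-1)` over the sets `t` of prime factors of `N` containing a prime `> z`.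
Since `∏ t` divides at most `x / ∏ t` of the integers `N ≤ x`, the total is at most `x` times
`∑_t ∏_{p ∈ t} ε_p = ∏_{p ≤ x} (1 + ε_p) - ∏_{p ≤ z} (1 + ε_p)` with `ε_p = 1/(p(p-1))`.
That difference is at most `(∑_{p > z} ε_p) · exp (∑_p ε_p) ≤ e/⌊z⌋`, as `ε_n = 1/(n-1) - 1/n`
telescopes.
-/

/-- The truncation `R_z(N) = ∏_{p ∣ N, p ≤ z} (1 - 1/p)⁻¹`. -/
noncomputable def Rz (z : ℝ) (N : ℕ) : ℝ :=
  ∏ p ∈ N.primeFactors.filter (fun p => p ≤ ⌊z⌋₊), (1 - 1/(p:ℝ))⁻¹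

open Finset

namespace Finset

variable {ι : Type*}

theorem prod_one_add_sub_prod_filter {R : Type*} [CommRing R] (s : Finset ι) (P : ι → Prop)
    [DecidablePred P] (f : ι → R) :
    ∏ i ∈ s, (1 + f i) - ∏ i ∈ s with P i, (1 + f i) =
      ∑ t ∈ s.powerset with ¬ ∀ i ∈ t, P i, ∏ i ∈ t, f i := by
  have h : (s.filter P).powerset = s.powerset.filter fun t => ∀ i ∈ t, P i := by
    ext t
    simp only [mem_powerset, mem_filter, subset_iff]
    grind
  rw [prod_one_add, prod_one_add, h, ← sum_filter_add_sum_filter_not s.powerset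
    (fun t => ∀ i ∈ t, P i), add_sub_cancel_left]

theorem prod_one_add_sub_one_le_sum_mul_prod (s : Finset ι) {f : ι → ℝ}
    (hf : ∀ i ∈ s, 0 ≤ f i) :
    ∏ i ∈ s, (1 + f i) - 1 ≤ (∑ i ∈ s, f i) * ∏ i ∈ s, (1 + f i) := by
  classical
  induction s using Finset.induction_on with
  | empty => simp
  | insert j s hj ih =>
    rw [prod_insert hj, sum_insert hj]
    have hfj := hf j (mem_insert_self j s)
    have hsum := sum_nonneg fun i hi => hf i (mem_insert_of_mem hi)
    have hprod : 1 ≤ ∏ i ∈ s, (1 + f i) :=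
      one_le_prod fun i hi => le_add_of_nonneg_right (hf i (mem_insert_of_mem hi))
    have := ih fun i hi => hf i (mem_insert_of_mem hi)
    nlinarith [mul_nonneg (mul_nonneg (add_nonneg hfj hsum) hfj) (zero_le_one.trans hprod)]

theorem prod_one_add_sub_prod_filter_le (s : Finset ι) (P : ι → Prop) [DecidablePred P]
    {f : ι → ℝ} (hf : ∀ i ∈ s, 0 ≤ f i) :
    ∏ i ∈ s, (1 + f i) - ∏ i ∈ s with P i, (1 + f i) ≤
      (∑ i ∈ s with ¬ P i, f i) * ∏ i ∈ s, (1 + f i) := by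
  have hP : 0 ≤ ∏ i ∈ s with P i, (1 + f i) :=
    prod_nonneg fun i hi => by linarith [hf i (mem_filter.1 hi).1]
  have hnotP := prod_one_add_sub_one_le_sum_mul_prod (s.filter (¬ P ·))
    fun i hi => hf i (mem_filter.1 hi).1
  rw [← prod_filter_mul_prod_filter_not s P]
  nlinarith

theorem sum_Icc_sum_filter_dvd_le (M : ℕ) (D : Finset ι) (m : ι → ℕ) {w : ι → ℝ}
    (hw : ∀ i ∈ D, 0 ≤ w i) :
    ∑ N ∈ Icc 1 M, ∑ i ∈ D with m i ∣ N, w i ≤ M * ∑ i ∈ D, w i / m i := by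
  have hcount : ∀ i, #{N ∈ Icc 1 M | m i ∣ N} = M / m i := fun i => by
    rw [← Nat.Ioc_filter_dvd_card_eq_div, ← Icc_add_one_left_eq_Ioc, zero_add]
  calc ∑ N ∈ Icc 1 M, ∑ i ∈ D with m i ∣ N, w i
      = ∑ i ∈ D, w i * #{N ∈ Icc 1 M | m i ∣ N} := by
        simp only [sum_filter]
        rw [sum_comm]
        refine sum_congr rfl fun i _ => ?_
        rw [← sum_filter, sum_const, nsmul_eq_mul, mul_comm]
    _ ≤ ∑ i ∈ D, w i * ((M : ℝ) / m i) := by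
        gcongr with i hi
        · exact hw i hi
        rw [hcount]
        exact Nat.cast_div_le
    _ = M * ∑ i ∈ D, w i / m i := by
        rw [mul_sum]
        exact sum_congr rfl fun i _ => by ring

end Finset

theorem inv_mul_sub_one_nonneg (n : ℕ) : 0 ≤ ((n : ℝ) * (n - 1))⁻¹ := by
  rcases n with _ | n
  · simp
  · push_cast
    rw [add_sub_cancel_right]
    positivity

theorem sum_Ioc_inv_mul_sub_one {k n : ℕ} (hk : k ≠ 0) (h : k ≤ n) :
    ∑ i ∈ Ioc k n, ((i : ℝ) * (i - 1))⁻¹ = (k : ℝ)⁻¹ - (n : ℝ)⁻¹ := by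
  induction n, h using Nat.le_induction with
  | base => simp
  | succ n hn ih =>
    have hn0 : (n : ℝ) ≠ 0 := by exact_mod_cast (Nat.pos_of_ne_zero hk).trans_le hn |>.ne'
    rw [sum_Ioc_succ_top hn, ih]
    push_cast
    rw [add_sub_cancel_right]
    field_simp
    ring

theorem sum_inv_mul_sub_one_le {k : ℕ} (hk : k ≠ 0) {s : Finset ℕ} (hs : ∀ n ∈ s, k < n) :
    ∑ n ∈ s, ((n : ℝ) * (n - 1))⁻¹ ≤ (k : ℝ)⁻¹ := by
  have hsub : s ⊆ Ioc k (s.sup id) := fun n hn => mem_Ioc.2 ⟨hs n hn, le_sup (f := id) hn⟩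
  calc ∑ n ∈ s, ((n : ℝ) * (n - 1))⁻¹
      ≤ ∑ n ∈ Ioc k (s.sup id), ((n : ℝ) * (n - 1))⁻¹ :=
        sum_le_sum_of_subset_of_nonneg hsub fun n _ _ => inv_mul_sub_one_nonneg n
    _ ≤ (k : ℝ)⁻¹ := by
        rcases le_or_gt k (s.sup id) with h | h
        · rw [sum_Ioc_inv_mul_sub_one hk h]
          linarith [inv_nonneg.2 (Nat.cast_nonneg (α := ℝ) (s.sup id))]
        · rw [Ioc_eq_empty_of_le h.le, sum_empty]
          positivity

theorem sum_powerset_filter_not_forall_le_prod_inv_mul_sub_one_le {T : Finset ℕ}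
    (hT : ∀ p ∈ T, 1 < p) {K : ℕ} (hK : K ≠ 0) :
    ∑ t ∈ T.powerset with ¬ ∀ p ∈ t, p ≤ K, ∏ p ∈ t, ((p : ℝ) * (p - 1))⁻¹ ≤ 3 / K := by
  have hsum : ∑ p ∈ T, ((p : ℝ) * (p - 1))⁻¹ ≤ 1 := by
    simpa using sum_inv_mul_sub_one_le one_ne_zero hT
  have htail : ∑ p ∈ T with ¬ p ≤ K, ((p : ℝ) * (p - 1))⁻¹ ≤ (K : ℝ)⁻¹ :=
    sum_inv_mul_sub_one_le hK fun p hp => not_le.1 (mem_filter.1 hp).2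
  have hprod : ∏ p ∈ T, (1 + ((p : ℝ) * (p - 1))⁻¹) ≤ 3 :=
    calc ∏ p ∈ T, (1 + ((p : ℝ) * (p - 1))⁻¹)
        ≤ Real.exp (∑ p ∈ T, ((p : ℝ) * (p - 1))⁻¹) :=
          Real.prod_one_add_le_exp_sum T inv_mul_sub_one_nonneg
      _ ≤ Real.exp 1 := Real.exp_le_exp.2 hsum
      _ ≤ 3 := Real.exp_one_lt_three.le
  rw [← prod_one_add_sub_prod_filter]
  calc _ ≤ (∑ p ∈ T with ¬ p ≤ K, ((p : ℝ) * (p - 1))⁻¹) *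
        ∏ p ∈ T, (1 + ((p : ℝ) * (p - 1))⁻¹) :=
        prod_one_add_sub_prod_filter_le T _ fun p _ => inv_mul_sub_one_nonneg p
    _ ≤ (K : ℝ)⁻¹ * 3 :=
        mul_le_mul htail hprod (prod_nonneg fun p _ => by linarith [inv_mul_sub_one_nonneg p])
          (by positivity)
    _ = 3 / K := by ring

theorem one_sub_one_div_inv_eq {p : ℝ} (hp : 1 < p) : (1 - 1 / p)⁻¹ = 1 + (p - 1)⁻¹ := by
  have : p - 1 ≠ 0 := by linarith
  field_simp
  ring

theorem Nat.cast_div_totient_eq_prod {n : ℕ} (hn : n ≠ 0) :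
    (n : ℝ) / n.totient = ∏ p ∈ n.primeFactors, (1 - 1 / (p : ℝ))⁻¹ := by
  have h := congrArg (Rat.cast : ℚ → ℝ) (Nat.totient_eq_mul_prod_factors n)
  push_cast at h
  rw [h, prod_inv_distrib, div_mul_cancel_left₀ (Nat.cast_ne_zero.2 hn)]
  simp [one_div]

theorem Nat.powerset_primeFactors_eq_filter {n : ℕ} (hn : n ≠ 0) {T : Finset ℕ}
    (hT : ∀ p ∈ T, p.Prime) (hnT : n.primeFactors ⊆ T) :
    n.primeFactors.powerset = T.powerset.filter fun t => ∏ p ∈ t, p ∣ n := by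
  ext t
  simp only [mem_powerset, mem_filter]
  refine ⟨fun ht => ⟨ht.trans hnT, (prod_dvd_prod_of_subset _ _ _ ht).trans
    (Nat.prod_primeFactors_dvd n)⟩, fun ⟨htT, hdvd⟩ p hp => ?_⟩
  exact Nat.mem_primeFactors.2 ⟨hT p (htT hp), (dvd_prod_of_mem _ hp).trans hdvd, hn⟩

theorem div_totient_sub_Rz_eq_sum (z : ℝ) {N : ℕ} (hN : N ≠ 0) :
    (N : ℝ) / N.totient - Rz z N =
      ∑ t ∈ N.primeFactors.powerset with ¬ ∀ p ∈ t, p ≤ ⌊z⌋₊, ∏ p ∈ t, ((p : ℝ) - 1)⁻¹ := by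
  have h : ∀ p ∈ N.primeFactors, (1 - 1 / (p : ℝ))⁻¹ = 1 + ((p : ℝ) - 1)⁻¹ := fun p hp =>
    one_sub_one_div_inv_eq (by exact_mod_cast (Nat.prime_of_mem_primeFactors hp).one_lt)
  rw [Nat.cast_div_totient_eq_prod hN, Rz, ← prod_one_add_sub_prod_filter, prod_congr rfl h,
    prod_congr rfl fun p hp => h p (mem_filter.1 hp).1]

theorem stmt_5 :
    ∃ C : ℝ, ∀ z x : ℝ, 2 ≤ z → 2 ≤ x →
      ∑ N ∈ Finset.Icc 1 ⌊x⌋₊, ((N:ℝ)/(Nat.totient N : ℝ) - Rz z N)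
        ≤ C * x / z := by
  refine ⟨6, fun z x hz hx => ?_⟩
  set K := ⌊z⌋₊
  set M := ⌊x⌋₊
  set T := (Iic M).filter Nat.Prime
  have hK : 1 ≤ K := Nat.le_floor (by norm_num; linarith)
  have hzK : z ≤ 2 * K := by
    have : (1 : ℝ) ≤ K := by exact_mod_cast hK
    linarith [Nat.lt_floor_add_one z]
  have hMx : (M : ℝ) ≤ x := Nat.floor_le (by linarith)
  have hT : ∀ p ∈ T, p.Prime := fun p hp => (mem_filter.1 hp).2
  set D := T.powerset.filter fun t => ¬ ∀ p ∈ t, p ≤ K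
  calc ∑ N ∈ Icc 1 M, ((N : ℝ) / N.totient - Rz z N)
      = ∑ N ∈ Icc 1 M, ∑ t ∈ D with ∏ p ∈ t, p ∣ N,
          ∏ p ∈ t, ((p : ℝ) - 1)⁻¹ := by
        refine sum_congr rfl fun N hN => ?_
        obtain ⟨hN1, hNM⟩ := mem_Icc.1 hN
        have hNT : N.primeFactors ⊆ T := fun p hp => mem_filter.2
          ⟨mem_Iic.2 ((Nat.le_of_mem_primeFactors hp).trans hNM), Nat.prime_of_mem_primeFactors hp⟩
        rw [div_totient_sub_Rz_eq_sum z (by omega),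
          Nat.powerset_primeFactors_eq_filter (by omega) hT hNT, filter_comm]
    _ ≤ M * ∑ t ∈ D,
          (∏ p ∈ t, ((p : ℝ) - 1)⁻¹) / (∏ p ∈ t, p : ℕ) :=
        sum_Icc_sum_filter_dvd_le M _ _ fun t ht => prod_nonneg fun p hp => by
          have := (hT p (mem_powerset.1 (mem_filter.1 ht).1 hp)).one_lt
          have : (1 : ℝ) < p := by exact_mod_cast this
          exact inv_nonneg.2 (by linarith)
    _ = M * ∑ t ∈ D, ∏ p ∈ t, ((p : ℝ) * (p - 1))⁻¹ := by
        refine congrArg _ (sum_congr rfl fun t _ => ?_)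
        rw [Nat.cast_prod, ← prod_div_distrib]
        exact prod_congr rfl fun p _ => by rw [mul_inv, div_eq_mul_inv, mul_comm]
    _ ≤ x * (3 / K) := mul_le_mul hMx
        (sum_powerset_filter_not_forall_le_prod_inv_mul_sub_one_le
          (fun p hp => (hT p hp).one_lt) (by omega))
        (sum_nonneg fun t _ => prod_nonneg fun p _ => inv_mul_sub_one_nonneg p) (by linarith)
    _ ≤ 6 * x / z := by
        rw [mul_div_assoc', div_le_div_iff₀ (by positivity) (by linarith)]
        nlinarith
end

section
/- For N ≤ x, the function K(N) = C₂·F(N−1)·G(N), where C₂ = ∏_{p>2}(1 − 1/(p−1)²), F(n) = ∏_{p|n, p>2}(1 − 1/(p−1)²)⁻¹ · ∏_{p|n}(1 − 1/((p−1)²(p+1))), and G(n) = ∏_{p|n, p>2}(1 − 1/(p−1)²)⁻¹ · ∏_{p^α ∥ n}(1 − 1/(p^α(p−1))). That is, the function K of Definition 1 admits this factorization for all N ≥ 2. -/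
/-- The Euler factor at `p` of the function `K(N)` from Definition 1. Here
`((N-1)/p)² = 1` if `p ∤ N - 1` and `0` if `p ∣ N - 1`. -/
noncomputable def Kfactor (N : ℕ) (p : ℕ) : ℝ :=
  if p ∣ N then
    1 - 1/((p:ℝ)^(N.factorization p) * ((p:ℝ) - 1))
  else
    1 - ((if (p:ℤ) ∣ ((N:ℤ) - 1) then (0:ℝ) else 1) * (p:ℝ) + 1)
          / (((p:ℝ) - 1)^2 * ((p:ℝ) + 1))

/-- The function `K(N)` of Definition 1, as a product over all primes. -/
noncomputable def K (N : ℕ) : ℝ := ∏' p : Nat.Primes, Kfactor N (p : ℕ)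

/-- The twin prime constant `C₂ = ∏_{p > 2} (1 - 1/(p-1)²)`. -/
noncomputable def C₂ : ℝ :=
  ∏' p : Nat.Primes, if (p : ℕ) = 2 then 1 else (1 - 1/(((p:ℕ):ℝ) - 1)^2)

/-- The multiplicative function `F` from the paper. -/
noncomputable def F (n : ℕ) : ℝ :=
  (∏ p ∈ n.primeFactors.filter (fun p => 2 < p), (1 - 1/((p:ℝ) - 1)^2)⁻¹)
    * ∏ p ∈ n.primeFactors, (1 - 1/(((p:ℝ) - 1)^2 * ((p:ℝ) + 1)))

/-- The multiplicative function `G` from the paper. -/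
noncomputable def G (n : ℕ) : ℝ :=
  (∏ p ∈ n.primeFactors.filter (fun p => 2 < p), (1 - 1/((p:ℝ) - 1)^2)⁻¹)
    * ∏ p ∈ n.primeFactors, (1 - 1/((p:ℝ)^(n.factorization p) * ((p:ℝ) - 1)))

/-!
At a prime `p`, the Euler factor of `K(N)` is the Euler factor `twinFactor p` of `C₂`, times the
local factor of `F(N - 1)` if `p ∣ N - 1`, times the local factor of `G(N)` if `p ∣ N`. The two
divisibilities are exclusive, and if `p` divides neither, then `p ≠ 2` and the Kronecker symbol
squared is `1`, so the Euler factor is `1 - (p + 1)/((p - 1)²(p + 1)) = 1 - 1/(p - 1)²`.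
Only the finitely many primes dividing `N (N - 1)` contribute to the last two factors, so the
product over all primes splits as `C₂ · F(N - 1) · G(N)`.
-/

noncomputable def twinFactor (p : ℕ) : ℝ :=
  if p = 2 then 1 else 1 - 1 / ((p : ℝ) - 1) ^ 2

lemma twinFactor_pos {p : ℕ} (hp : 2 ≤ p) : 0 < twinFactor p := by
  unfold twinFactor
  split_ifs with h2
  · exact one_pos
  · have hp3 : (3 : ℝ) ≤ p := by exact_mod_cast (show 3 ≤ p by omega)
    rw [sub_pos, div_lt_one (by nlinarith)]
    nlinarith

lemma summable_one_div_natCast_sub_one_sq :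
    Summable fun n : ℕ => 1 / ((n : ℝ) - 1) ^ 2 :=
  (summable_nat_add_iff 1).1 (by simp)

lemma hasProd_twinFactor : HasProd (fun p : Nat.Primes => twinFactor p) C₂ := by
  have hdefect : Summable fun p : Nat.Primes => twinFactor p - 1 := by
    refine (summable_one_div_natCast_sub_one_sq.subtype _).of_norm_bounded fun p => ?_
    unfold twinFactor
    split_ifs <;> simp [sq_nonneg]
  have hmul : Multipliable fun p : Nat.Primes => twinFactor p := by
    simpa using Real.multipliable_one_add_of_summable hdefect
  exact hmul.hasProd

lemma hasProd_ite_dvd_primes {M : Type*} [CommMonoid M] [TopologicalSpace M]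
    (f : ℕ → M) {n : ℕ} (hn : n ≠ 0) :
    HasProd (fun p : Nat.Primes => if (p : ℕ) ∣ n then f p else 1)
      (∏ p ∈ n.primeFactors, f p) := by
  have hprime : ∀ p ∈ n.primeFactors, p.Prime := fun p hp => Nat.prime_of_mem_primeFactors hp
  set g := fun p : Nat.Primes => if (p : ℕ) ∣ n then f p else 1
  have hprod : HasProd g (∏ p ∈ n.primeFactors.subtype Nat.Prime, g p) :=
    hasProd_prod_of_ne_finset_one fun p hp => if_neg fun hdvd =>
      hp (Finset.mem_subtype.2 (Nat.mem_primeFactors.2 ⟨p.2, hdvd, hn⟩))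
  convert hprod using 1
  conv_lhs => rw [← Finset.subtype_map_of_mem hprime, Finset.prod_map]
  refine Finset.prod_congr rfl fun p hp => ?_
  exact (if_pos (Nat.dvd_of_mem_primeFactors (Finset.mem_subtype.1 hp))).symm

noncomputable def Ffactor (p : ℕ) : ℝ :=
  (twinFactor p)⁻¹ * (1 - 1 / (((p : ℝ) - 1) ^ 2 * ((p : ℝ) + 1)))

noncomputable def Gfactor (n p : ℕ) : ℝ :=
  (twinFactor p)⁻¹ * (1 - 1 / ((p : ℝ) ^ n.factorization p * ((p : ℝ) - 1)))

lemma prod_filter_two_lt_eq_prod_twinFactor_inv (n : ℕ) :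
    ∏ p ∈ n.primeFactors.filter (fun p => 2 < p), (1 - 1 / ((p : ℝ) - 1) ^ 2)⁻¹
      = ∏ p ∈ n.primeFactors, (twinFactor p)⁻¹ := by
  rw [Finset.prod_filter]
  refine Finset.prod_congr rfl fun p hp => ?_
  have hp2 := (Nat.prime_of_mem_primeFactors hp).two_le
  unfold twinFactor
  split_ifs <;> first | omega | simp

lemma F_eq_prod_Ffactor (n : ℕ) : F n = ∏ p ∈ n.primeFactors, Ffactor p := by
  rw [F, prod_filter_two_lt_eq_prod_twinFactor_inv, ← Finset.prod_mul_distrib]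
  rfl

lemma G_eq_prod_Gfactor (n : ℕ) : G n = ∏ p ∈ n.primeFactors, Gfactor n p := by
  rw [G, prod_filter_two_lt_eq_prod_twinFactor_inv, ← Finset.prod_mul_distrib]
  rfl

lemma Kfactor_eq_twinFactor_mul {N p : ℕ} (hN : N ≠ 0) (hp : p.Prime) :
    Kfactor N p = twinFactor p *
      ((if p ∣ N - 1 then Ffactor p else 1) * (if p ∣ N then Gfactor N p else 1)) := by
  have htwin : twinFactor p ≠ 0 := (twinFactor_pos hp.two_le).ne'
  have hdvd_sub_one : (p : ℤ) ∣ (N : ℤ) - 1 ↔ p ∣ N - 1 := by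
    rw [← Int.natCast_dvd_natCast, Nat.cast_sub (by omega), Nat.cast_one]
  have hnot_both : ¬ (p ∣ N ∧ p ∣ N - 1) := by
    rintro ⟨h, h'⟩
    have h1 : p ∣ N - (N - 1) := Nat.dvd_sub h h'
    rw [Nat.sub_sub_self (by omega)] at h1
    exact hp.one_lt.ne' (Nat.dvd_one.1 h1)
  unfold Kfactor Ffactor Gfactor
  by_cases hN' : p ∣ N
  · have hN1 : ¬ p ∣ N - 1 := fun h => hnot_both ⟨hN', h⟩
    simp only [hN', hN1, if_true, if_false, one_mul, mul_inv_cancel_left₀ htwin]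
  by_cases hN1 : p ∣ N - 1
  · simp only [hN', hN1, hdvd_sub_one, if_true, if_false, mul_one, mul_inv_cancel_left₀ htwin,
      zero_mul, zero_add]
  · have hp2 : p ≠ 2 := by
      rintro rfl
      omega
    have hp1 : ((p : ℝ) + 1) ≠ 0 := by positivity
    simp only [hN', hN1, hdvd_sub_one, if_false, mul_one, one_mul, twinFactor, hp2]
    rw [mul_comm, ← div_div, div_self hp1]

theorem stmt_7 : ∀ N : ℕ, 2 ≤ N → K N = C₂ * F (N - 1) * G N := by
  intro N hN
  have hF := hasProd_ite_dvd_primes Ffactor (n := N - 1) (by omega)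
  have hG := hasProd_ite_dvd_primes (Gfactor N) (n := N) (by omega)
  rw [F_eq_prod_Ffactor, G_eq_prod_Gfactor, mul_assoc,
    ← (hasProd_twinFactor.mul (hF.mul hG)).tprod_eq]
  exact tprod_congr fun p => Kfactor_eq_twinFactor_mul (by omega) p.2
end

section
/- Define μ'_k = ∏_p (1 − 1/p + (1/p)(1 − 1/p)^{−k}), the product over all primes (the k-th moment of N/φ(N)). Then log μ'_k ≪ k·log log k for k ≥ 3. -/
/-- `μ'_k = ∏_p (1 - 1/p + (1/p)(1 - 1/p)^{-k})`, the `k`-th moment of `N/φ(N)`. -/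
noncomputable def mu' (k : ℕ) : ℝ :=
  ∏' p : Nat.Primes,
    (1 - 1/((p:ℕ):ℝ) + (1/((p:ℕ):ℝ)) * (1 - 1/((p:ℕ):ℝ)) ^ (-(k:ℤ)))

/-!
Write `x = 1/p`. The Euler factor `1 - x + x (1 - x)^{-k}` is at most `(1 - x)^{-k} ≤ e^{2kx}`,
and for `p > k` it is `1 + O(k x²)`. Hence `log μ'_k ≤ 2k ∑_{p ≤ k} 1/p + O(1)`, since
`∑_{p > k} k/p² ≤ 1`. Chebyshev's bound `n# ≤ 4ⁿ` leaves at most `2^{j+2}/j` primes in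
`[2^j, 2^{j+1})`, so `∑_{p ≤ n} 1/p ≤ 4 ∑_{j ≤ log₂ n} 1/j ≪ log log n`.
-/

open Finset Real

noncomputable def eulerFactor (k : ℕ) (x : ℝ) : ℝ := 1 - x + x * (1 - x) ^ (-(k : ℤ))

theorem one_le_eulerFactor (k : ℕ) {x : ℝ} (h0 : 0 ≤ x) (h1 : x < 1) : 1 ≤ eulerFactor k x := by
  have hA : 1 ≤ (1 - x) ^ (-(k : ℤ)) := by
    rw [zpow_neg, zpow_natCast]
    exact one_le_inv₀ (pow_pos (by linarith) k) |>.mpr (pow_le_one₀ (by linarith) (by linarith))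
  unfold eulerFactor
  nlinarith

theorem one_sub_zpow_neg_le_exp (k : ℕ) {x : ℝ} (h0 : 0 ≤ x) (h2 : x ≤ 1 / 2) :
    (1 - x) ^ (-(k : ℤ)) ≤ exp (2 * k * x) := by
  have hinv : (1 - x)⁻¹ ≤ exp (2 * x) := by
    rw [inv_le_iff_one_le_mul₀ (by linarith)]
    nlinarith [add_one_le_exp (2 * x), exp_pos (2 * x)]
  calc (1 - x) ^ (-(k : ℤ)) = ((1 - x)⁻¹) ^ k := by rw [zpow_neg, zpow_natCast, inv_pow]
    _ ≤ exp (2 * x) ^ k := pow_le_pow_left₀ (inv_nonneg.mpr (by linarith)) hinv k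
    _ = exp (2 * k * x) := by rw [← exp_nat_mul]; ring_nf

theorem eulerFactor_le_exp (k : ℕ) {x : ℝ} (h0 : 0 ≤ x) (h2 : x ≤ 1 / 2) :
    eulerFactor k x ≤ exp (2 * k * x) := by
  have hA := one_sub_zpow_neg_le_exp k h0 h2
  have hexp : 1 ≤ exp (2 * k * x) := one_le_exp (by positivity)
  unfold eulerFactor
  nlinarith

theorem eulerFactor_le_exp_sq (k : ℕ) {x : ℝ} (h0 : 0 ≤ x) (h2 : x ≤ 1 / 2)
    (hkx : k * x ≤ 1) : eulerFactor k x ≤ exp (exp 2 * k * x ^ 2) := by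
  have hle : (1 - x) ^ k ≤ 1 := pow_le_one₀ (by linarith) (by linarith)
  have hA : (1 - x) ^ (-(k : ℤ)) ≤ exp 2 :=
    (one_sub_zpow_neg_le_exp k h0 h2).trans (exp_le_exp.mpr (by linarith))
  have hbernoulli : 1 - k * x ≤ (1 - x) ^ k := by
    simpa [sub_eq_add_neg] using one_add_mul_le_pow (by linarith : (-2 : ℝ) ≤ -x) k
  have hsub : (1 - x) ^ (-(k : ℤ)) - 1 = (1 - x) ^ (-(k : ℤ)) * (1 - (1 - x) ^ k) := by
    have : (1 - x) ^ k ≠ 0 := pow_ne_zero k (by linarith)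
    rw [zpow_neg, zpow_natCast]; field_simp
  have hgrowth : (1 - x) ^ (-(k : ℤ)) - 1 ≤ exp 2 * (k * x) := by
    rw [hsub]
    exact mul_le_mul hA (by linarith) (by linarith) (exp_pos 2).le
  calc eulerFactor k x = 1 + x * ((1 - x) ^ (-(k : ℤ)) - 1) := by unfold eulerFactor; ring
    _ ≤ 1 + x * (exp 2 * (k * x)) := by gcongr
    _ = exp 2 * k * x ^ 2 + 1 := by ring
    _ ≤ exp (exp 2 * k * x ^ 2) := add_one_le_exp _

theorem natCast_inv_le_half {p : ℕ} (hp : 2 ≤ p) : (p : ℝ)⁻¹ ≤ 1 / 2 := by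
  rw [one_div]; exact inv_anti₀ two_pos (mod_cast hp)

theorem one_le_eulerFactor_inv (k : ℕ) {p : ℕ} (hp : 2 ≤ p) : 1 ≤ eulerFactor k (p : ℝ)⁻¹ :=
  one_le_eulerFactor k (by positivity) ((natCast_inv_le_half hp).trans_lt (by norm_num))

theorem prod_eulerFactor_le {s : Finset ℕ} (k : ℕ) (hs : ∀ p ∈ s, 2 ≤ p) :
    ∏ p ∈ s, eulerFactor k (p : ℝ)⁻¹ ≤ exp (2 * k * ∑ p ∈ s, (p : ℝ)⁻¹) := by
  rw [mul_sum, exp_sum]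
  exact prod_le_prod (fun p hp ↦ zero_le_one.trans (one_le_eulerFactor_inv k (hs p hp)))
    fun p hp ↦ eulerFactor_le_exp k (by positivity) (natCast_inv_le_half (hs p hp))

theorem sum_inv_sq_le_inv_of_lt {s : Finset ℕ} {k : ℕ} (hk : k ≠ 0) (hs : ∀ n ∈ s, k < n) :
    ∑ n ∈ s, ((n : ℝ) ^ 2)⁻¹ ≤ (k : ℝ)⁻¹ := by
  set N := max k (s.sup id)
  calc ∑ n ∈ s, ((n : ℝ) ^ 2)⁻¹ ≤ ∑ n ∈ Ioc k N, ((n : ℝ) ^ 2)⁻¹ :=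
        sum_le_sum_of_subset_of_nonneg
          (fun n hn ↦ mem_Ioc.mpr ⟨hs n hn, le_max_of_le_right (le_sup (f := id) hn)⟩)
          fun _ _ _ ↦ by positivity
    _ ≤ (k : ℝ)⁻¹ - (N : ℝ)⁻¹ := sum_Ioc_inv_sq_le_sub hk (le_max_left _ _)
    _ ≤ (k : ℝ)⁻¹ := sub_le_self _ (by positivity)

theorem prod_eulerFactor_le_exp_exp_two {s : Finset ℕ} {k : ℕ} (hk : k ≠ 0)
    (hs : ∀ p ∈ s, 2 ≤ p ∧ k < p) : ∏ p ∈ s, eulerFactor k (p : ℝ)⁻¹ ≤ exp (exp 2) := by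
  have hfactor (p : ℕ) (hp : p ∈ s) :
      eulerFactor k (p : ℝ)⁻¹ ≤ exp (exp 2 * k * ((p : ℝ) ^ 2)⁻¹) := by
    obtain ⟨h2, hkp⟩ := hs p hp
    have hkx : k * (p : ℝ)⁻¹ ≤ 1 := by
      rw [← div_eq_mul_inv, div_le_one (by exact_mod_cast (by omega : 0 < p))]
      exact_mod_cast hkp.le
    simpa [inv_pow] using
      eulerFactor_le_exp_sq k (by positivity) (natCast_inv_le_half h2) hkx
  calc ∏ p ∈ s, eulerFactor k (p : ℝ)⁻¹ ≤ ∏ p ∈ s, exp (exp 2 * k * ((p : ℝ) ^ 2)⁻¹) :=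
        prod_le_prod (fun p hp ↦ zero_le_one.trans (one_le_eulerFactor_inv k (hs p hp).1))
          hfactor
    _ = exp (exp 2 * k * ∑ p ∈ s, ((p : ℝ) ^ 2)⁻¹) := by rw [mul_sum, exp_sum]
    _ ≤ exp (exp 2 * k * (k : ℝ)⁻¹) := by
        gcongr; exact sum_inv_sq_le_inv_of_lt hk fun p hp ↦ (hs p hp).2
    _ = exp (exp 2) := by field_simp

theorem prod_eulerFactor_le_of_forall_prime {t : Finset ℕ} {k : ℕ} (hk : k ≠ 0)
    (ht : ∀ p ∈ t, p.Prime) :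
    ∏ p ∈ t, eulerFactor k (p : ℝ)⁻¹ ≤ exp (2 * k * ∑ p ∈ Nat.primesLE k, (p : ℝ)⁻¹ + exp 2) := by
  rw [← prod_filter_mul_prod_filter_not t (· ≤ k), exp_add]
  gcongr
  · exact prod_nonneg fun p hp ↦
      zero_le_one.trans (one_le_eulerFactor_inv k (ht p (mem_filter.mp hp).1).two_le)
  · refine (prod_eulerFactor_le k fun p hp ↦ (ht p (mem_filter.mp hp).1).two_le).trans ?_
    gcongr
    intro p hp
    obtain ⟨hpt, hpk⟩ := mem_filter.mp hp
    exact Nat.mem_primesLE.mpr ⟨hpk, ht p hpt⟩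
  · refine prod_eulerFactor_le_exp_exp_two hk fun p hp ↦ ?_
    obtain ⟨hpt, hpk⟩ := mem_filter.mp hp
    exact ⟨(ht p hpt).two_le, not_le.mp hpk⟩

theorem log_tprod_le_of_prod_le_exp {ι : Type*} {f : ι → ℝ} {T : ℝ} (hf : ∀ i, 1 ≤ f i)
    (h : ∀ s : Finset ι, ∏ i ∈ s, f i ≤ exp T) : log (∏' i, f i) ≤ T := by
  have hT : 1 ≤ exp T := by simpa using h ∅
  have hone : 1 ≤ ∏' i, f i := by
    by_cases hm : Multipliable f
    · exact le_hasProd_of_le_prod hm.hasProd fun s ↦ one_le_prod fun i _ ↦ hf i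
    · rw [tprod_eq_one_of_not_multipliable hm]
  rw [log_le_iff_le_exp (zero_lt_one.trans_le hone)]
  exact tprod_le_of_prod_le' hT h

theorem log_mu'_le {k : ℕ} (hk : k ≠ 0) :
    log (mu' k) ≤ 2 * k * ∑ p ∈ Nat.primesLE k, (p : ℝ)⁻¹ + exp 2 := by
  have hmu : mu' k = ∏' p : Nat.Primes, eulerFactor k ((p : ℕ) : ℝ)⁻¹ := by
    simp_rw [← one_div]; rfl
  rw [hmu]
  refine log_tprod_le_of_prod_le_exp (fun p ↦ one_le_eulerFactor_inv k p.2.two_le) fun s ↦ ?_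
  calc ∏ p ∈ s, eulerFactor k ((p : ℕ) : ℝ)⁻¹
        = ∏ p ∈ s.image ((↑) : Nat.Primes → ℕ), eulerFactor k (p : ℝ)⁻¹ :=
        (prod_image (f := fun n : ℕ ↦ eulerFactor k (n : ℝ)⁻¹)
          fun _ _ _ _ h ↦ Nat.Primes.coe_nat_injective h).symm
    _ ≤ _ := prod_eulerFactor_le_of_forall_prime hk fun p hp ↦ by
        obtain ⟨q, -, rfl⟩ := mem_image.mp hp
        exact q.2

theorem pow_card_le_four_pow {s : Finset ℕ} {m n : ℕ}
    (hs : ∀ p ∈ s, p.Prime ∧ m ≤ p ∧ p ≤ n) : m ^ #s ≤ 4 ^ n :=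
  calc m ^ #s ≤ ∏ p ∈ s, p := pow_card_le_prod _ _ _ fun p hp ↦ (hs p hp).2.1
    _ ≤ ∏ p ∈ Nat.primesLE n, p :=
      prod_le_prod_of_subset_of_one_le'
        (fun p hp ↦ Nat.mem_primesLE.mpr ⟨(hs p hp).2.2, (hs p hp).1⟩)
        fun _ hp _ ↦ (Nat.one_lt_of_mem_primesLE hp).le
    _ ≤ 4 ^ n := primorial_le_four_pow n

theorem mul_card_le_of_mem_dyadic {s : Finset ℕ} {j : ℕ}
    (hs : ∀ p ∈ s, p.Prime ∧ 2 ^ j ≤ p ∧ p < 2 ^ (j + 1)) : j * #s ≤ 2 ^ (j + 2) := by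
  have h : (2 ^ j) ^ #s ≤ 4 ^ 2 ^ (j + 1) :=
    pow_card_le_four_pow fun p hp ↦ ⟨(hs p hp).1, (hs p hp).2.1, (hs p hp).2.2.le⟩
  rw [← pow_mul, show (4 : ℕ) = 2 ^ 2 by rfl, ← pow_mul, ← pow_succ'] at h
  exact (Nat.pow_le_pow_iff_right one_lt_two).mp h

theorem sum_inv_le_of_mem_dyadic {s : Finset ℕ} {j : ℕ} (hj : j ≠ 0)
    (hs : ∀ p ∈ s, p.Prime ∧ 2 ^ j ≤ p ∧ p < 2 ^ (j + 1)) :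
    ∑ p ∈ s, (p : ℝ)⁻¹ ≤ 4 / j := by
  have hcard : (j : ℝ) * #s ≤ 2 ^ (j + 2) := mod_cast mul_card_le_of_mem_dyadic hs
  have hj : (0 : ℝ) < j := by positivity
  calc ∑ p ∈ s, (p : ℝ)⁻¹ ≤ ∑ _p ∈ s, ((2 : ℝ) ^ j)⁻¹ :=
        sum_le_sum fun p hp ↦ inv_anti₀ (by positivity) (mod_cast (hs p hp).2.1)
    _ = #s / 2 ^ j := by rw [sum_const, nsmul_eq_mul, div_eq_mul_inv]
    _ ≤ 4 / j := by
      rw [div_le_div_iff₀ (by positivity) hj]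
      linarith [show (2 : ℝ) ^ (j + 2) = 4 * 2 ^ j by ring]

theorem sum_inv_primesLE_le (n : ℕ) :
    ∑ p ∈ Nat.primesLE n, (p : ℝ)⁻¹ ≤ 4 * (1 + log (Nat.log 2 n)) := by
  have hmaps : ∀ p ∈ Nat.primesLE n, Nat.log 2 p ∈ Icc 1 (Nat.log 2 n) := fun p hp ↦
    mem_Icc.mpr ⟨Nat.log_pos one_lt_two (Nat.two_le_of_mem_primesLE hp),
      Nat.log_mono_right (Nat.le_of_mem_primesLE hp)⟩
  rw [← sum_fiberwise_of_maps_to hmaps]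
  calc ∑ j ∈ Icc 1 (Nat.log 2 n), ∑ p ∈ Nat.primesLE n with Nat.log 2 p = j, (p : ℝ)⁻¹
      ≤ ∑ j ∈ Icc 1 (Nat.log 2 n), 4 * (j : ℝ)⁻¹ := by
        refine sum_le_sum fun j hj ↦ ?_
        rw [← div_eq_mul_inv]
        refine sum_inv_le_of_mem_dyadic (Nat.one_le_iff_ne_zero.mp (mem_Icc.mp hj).1) fun p hp ↦ ?_
        obtain ⟨hpn, rfl⟩ := mem_filter.mp hp
        have hprime := Nat.prime_of_mem_primesLE hpn
        exact ⟨hprime, Nat.pow_log_le_self 2 hprime.ne_zero,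
          Nat.lt_pow_succ_log_self one_lt_two p⟩
    _ = 4 * (harmonic (Nat.log 2 n) : ℝ) := by
        rw [← mul_sum, harmonic_eq_sum_Icc]; push_cast; rfl
    _ ≤ 4 * (1 + log (Nat.log 2 n)) := by
        gcongr; exact harmonic_le_one_add_log _

theorem log_natLog_two_le {n : ℕ} (hn : 2 ≤ n) :
    log (Nat.log 2 n) ≤ log (log n) - log (log 2) := by
  have hJ : (0 : ℝ) < Nat.log 2 n := mod_cast Nat.log_pos one_lt_two hn
  calc log (Nat.log 2 n) ≤ log (log n / log 2) := by
        gcongr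
        simpa [Real.logb] using natLog_le_logb n 2
    _ = log (log n) - log (log 2) :=
        log_div (log_pos (by exact_mod_cast hn)).ne' (log_pos one_lt_two).ne'

theorem sum_inv_primesLE_le_log_log {n : ℕ} (hn : 2 ≤ n) :
    ∑ p ∈ Nat.primesLE n, (p : ℝ)⁻¹ ≤ 4 * (1 - log (log 2) + log (log n)) :=
  calc ∑ p ∈ Nat.primesLE n, (p : ℝ)⁻¹ ≤ 4 * (1 + log (Nat.log 2 n)) := sum_inv_primesLE_le n
    _ ≤ 4 * (1 + (log (log n) - log (log 2))) := by gcongr; exact log_natLog_two_le hn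
    _ = 4 * (1 - log (log 2) + log (log n)) := by ring

theorem stmt_15 :
    ∃ C : ℝ, ∀ k : ℕ, 3 ≤ k →
      Real.log (mu' k) ≤ C * k * Real.log (Real.log k) := by
  have hlog3 : 0 < log (log 3) :=
    log_pos ((lt_log_iff_exp_lt (by norm_num)).mpr (by linarith [exp_one_lt_d9]))
  have hlog2 : log (log 2) < 0 := log_neg (log_pos one_lt_two) (by linarith [log_two_lt_d9])
  set A := 8 - 8 * log (log 2) + exp 2
  have hA : 0 ≤ A := by linarith [exp_pos 2]
  refine ⟨A / log (log 3) + 8, fun k hk ↦ ?_⟩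
  have hk1 : (1 : ℝ) ≤ k := mod_cast (by omega : 1 ≤ k)
  have hL : log (log 3) ≤ log (log k) :=
    log_le_log (log_pos (by norm_num)) (log_le_log (by norm_num) (mod_cast hk))
  calc log (mu' k) ≤ 2 * k * ∑ p ∈ Nat.primesLE k, (p : ℝ)⁻¹ + exp 2 := log_mu'_le (by omega)
    _ ≤ 2 * k * (4 * (1 - log (log 2) + log (log k))) + exp 2 * k := by
        gcongr
        · exact sum_inv_primesLE_le_log_log (by omega)
        · exact le_mul_of_one_le_right (exp_pos 2).le hk1
    _ = A * k * 1 + 8 * k * log (log k) := by ring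
    _ ≤ A * k * (log (log k) / log (log 3)) + 8 * k * log (log k) := by
        gcongr
        rwa [one_le_div hlog3]
    _ = (A / log (log 3) + 8) * k * log (log k) := by ring
end

section
/- For z = (1/10)·log x and x sufficiently large, x^{6/5}·log log x · ∑_{σ: m_σ > x} 1/m_σ + x^{1/5}·log log x · ∑_{σ: m_σ ≤ x} 1 ≪ x^{3/4}, where σ ranges over configurations (A, B, C, {e_ℓ}) with A, B, C partitioning the primes ≤ z and e_ℓ ≥ 1 for ℓ ∈ B, and m_σ = ∏_{ℓ∈A∪C} ℓ · ∏_{ℓ∈B} ℓ^{e_ℓ+1}. -/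
/-- A configuration `σ = (A, B, C, {e_ℓ}_{ℓ ∈ B})`: the sets `A`, `B`, `C`
partition the set of primes `≤ z`, and `e ℓ ≥ 1` for `ℓ ∈ B` (with `e`
supported on `B`). -/
structure Config (z : ℝ) where
  A : Finset ℕ
  B : Finset ℕ
  C : Finset ℕ
  e : ℕ → ℕ
  partition : A ∪ B ∪ C = (Finset.Iic ⌊z⌋₊).filter Nat.Prime
  disjAB : Disjoint A B
  disjAC : Disjoint A C
  disjBC : Disjoint B C
  he : ∀ ℓ ∈ B, 1 ≤ e ℓ
  he' : ∀ ℓ ∉ B, e ℓ = 0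

/-- The modulus `m_σ = ∏_{ℓ ∈ A ∪ C} ℓ · ∏_{ℓ ∈ B} ℓ^{e_ℓ + 1}`. -/
def msig {z : ℝ} (σ : Config z) : ℕ :=
  (∏ ℓ ∈ σ.A ∪ σ.C, ℓ) * ∏ ℓ ∈ σ.B, ℓ ^ (σ.e ℓ + 1)

namespace ConfigAux

variable {z : ℝ} (σ : Config z)

lemma mem_union_prime {ℓ : ℕ} (h : ℓ ∈ σ.A ∪ σ.B ∪ σ.C) : ℓ.Prime ∧ ℓ ≤ ⌊z⌋₊ := by
  rw [σ.partition] at h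
  simp only [Finset.mem_filter, Finset.mem_Iic] at h
  exact ⟨h.2, h.1⟩

lemma prime_of_mem_AC {ℓ : ℕ} (h : ℓ ∈ σ.A ∪ σ.C) : ℓ.Prime := by
  rcases Finset.mem_union.mp h with h | h
  · exact (mem_union_prime σ (by simp [h])).1
  · exact (mem_union_prime σ (by simp [h])).1

lemma prime_of_mem_B {ℓ : ℕ} (h : ℓ ∈ σ.B) : ℓ.Prime :=
  (mem_union_prime σ (by simp [h])).1

lemma msig_pos : 0 < msig σ := by
  apply Nat.mul_pos
  · exact Finset.prod_pos fun ℓ hℓ => (prime_of_mem_AC σ hℓ).pos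
  · exact Finset.prod_pos fun ℓ hℓ => pow_pos (prime_of_mem_B σ hℓ).pos _

lemma msig_smooth : msig σ ∈ Nat.smoothNumbers (⌊z⌋₊ + 1) := by
  rw [Nat.mem_smoothNumbers']
  intro p pp hdvd
  have hp : p ∈ σ.A ∪ σ.B ∪ σ.C := by
    rcases (Nat.Prime.prime pp).2.2 _ _ hdvd with h | h
    · obtain ⟨ℓ, hℓ, hdl⟩ := (Prime.dvd_finset_prod_iff (Nat.Prime.prime pp) _).mp h
      have : p = ℓ := ((Nat.prime_dvd_prime_iff_eq pp (prime_of_mem_AC σ hℓ)).mp hdl)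
      subst this
      rcases Finset.mem_union.mp hℓ with h' | h' <;> simp [h']
    · obtain ⟨ℓ, hℓ, hdl⟩ := (Prime.dvd_finset_prod_iff (Nat.Prime.prime pp) _).mp h
      have : p = ℓ := (Nat.prime_dvd_prime_iff_eq pp (prime_of_mem_B σ hℓ)).mp
        (pp.dvd_of_dvd_pow hdl)
      subst this; simp [hℓ]
  exact Nat.lt_succ_of_le (mem_union_prime σ hp).2

lemma factorization_msig {p : ℕ} (hp : p ∈ σ.B) :
    (msig σ).factorization p = σ.e p + 1 := by
  have hAC : ∀ ℓ ∈ σ.A ∪ σ.C, ℓ ≠ 0 := fun ℓ h => (prime_of_mem_AC σ h).pos.ne'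
  have hB : ∀ ℓ ∈ σ.B, ℓ ^ (σ.e ℓ + 1) ≠ 0 := fun ℓ h =>
    (pow_pos (prime_of_mem_B σ h).pos _).ne'
  rw [msig, Nat.factorization_mul (Finset.prod_ne_zero_iff.mpr hAC)
      (Finset.prod_ne_zero_iff.mpr hB),
    Nat.factorization_prod hAC, Nat.factorization_prod hB]
  have h1 : ∀ ℓ ∈ σ.A ∪ σ.C, (ℓ : ℕ).factorization p = 0 := by
    intro ℓ hℓ
    rw [Nat.Prime.factorization (prime_of_mem_AC σ hℓ), Finsupp.single_apply]
    have : ℓ ≠ p := by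
      rintro rfl
      rcases Finset.mem_union.mp hℓ with h' | h'
      · exact (Finset.disjoint_left.mp σ.disjAB) h' hp
      · exact (Finset.disjoint_left.mp σ.disjBC) hp h'
    simp [this]
  have h2 : ∀ ℓ ∈ σ.B, ((ℓ : ℕ) ^ (σ.e ℓ + 1)).factorization p
      = if ℓ = p then σ.e ℓ + 1 else 0 := by
    intro ℓ hℓ
    rw [Nat.Prime.factorization_pow (prime_of_mem_B σ hℓ), Finsupp.single_apply]
  rw [Finsupp.add_apply, Finsupp.finset_sum_apply, Finsupp.finset_sum_apply,
    Finset.sum_congr rfl h1, Finset.sum_congr rfl h2, Finset.sum_const_zero,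
    Finset.sum_ite_eq' σ.B p (fun ℓ => σ.e ℓ + 1), if_pos hp, zero_add]

lemma inj : Function.Injective
    (fun σ : Config z => ((σ.A, σ.B), msig σ)) := by
  rintro σ₁ σ₂ h
  simp only [Prod.mk.injEq] at h
  obtain ⟨⟨hA, hB⟩, hm⟩ := h
  have hC : σ₁.C = σ₂.C := by
    have e1 : σ₁.C = ((σ₁.A ∪ σ₁.B) ∪ σ₁.C) \ (σ₁.A ∪ σ₁.B) :=
      (Finset.union_sdiff_cancel_left (by
        rw [Finset.disjoint_union_left]; exact ⟨σ₁.disjAC, σ₁.disjBC⟩)).symm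
    have e2 : σ₂.C = ((σ₂.A ∪ σ₂.B) ∪ σ₂.C) \ (σ₂.A ∪ σ₂.B) :=
      (Finset.union_sdiff_cancel_left (by
        rw [Finset.disjoint_union_left]; exact ⟨σ₂.disjAC, σ₂.disjBC⟩)).symm
    rw [e1, e2, σ₁.partition, σ₂.partition, hA, hB]
  have hE : σ₁.e = σ₂.e := by
    funext p
    by_cases hp : p ∈ σ₁.B
    · have h1 := factorization_msig σ₁ hp
      have h2 := factorization_msig σ₂ (hB ▸ hp)
      rw [hm] at h1
      omega
    · rw [σ₁.he' p hp, σ₂.he' p (hB ▸ hp)]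
  cases σ₁; cases σ₂
  simp_all

end ConfigAux

open Real in
/-- The completely multiplicative function `n ↦ n ^ (-1/10)`. -/
noncomputable def rfun : ℕ →* ℝ where
  toFun n := (n : ℝ) ^ (-(1/10) : ℝ)
  map_one' := by simp
  map_mul' m n := by
    push_cast
    rw [Real.mul_rpow (Nat.cast_nonneg m) (Nat.cast_nonneg n)]

lemma rfun_apply (n : ℕ) : rfun n = (n : ℝ) ^ (-(1/10) : ℝ) := rfl

lemma two_rpow_le : (2 : ℝ) ^ (-(1/10) : ℝ) ≤ 15/16 := by
  have h10 : ((2 : ℝ) ^ (-(1/10) : ℝ)) ^ (10 : ℕ) ≤ (15/16 : ℝ) ^ (10 : ℕ) := by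
    rw [← Real.rpow_natCast ((2:ℝ) ^ (-(1/10):ℝ)) 10, ← Real.rpow_mul (by norm_num),
      show ((-(1/10) : ℝ) * (10:ℕ)) = -1 by push_cast; norm_num, Real.rpow_neg_one]
    norm_num
  exact le_of_pow_le_pow_left₀ (by norm_num) (by norm_num) h10

lemma factor_le {p : ℕ} (hp : p.Prime) : (1 - rfun p)⁻¹ ≤ 16 := by
  have h1 : rfun p ≤ 15/16 := by
    rw [rfun_apply]
    calc (p : ℝ) ^ (-(1/10) : ℝ) ≤ (2 : ℝ) ^ (-(1/10) : ℝ) :=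
          Real.rpow_le_rpow_of_nonpos (by norm_num) (by exact_mod_cast hp.two_le) (by norm_num)
      _ ≤ 15/16 := two_rpow_le
  have h2 : (16 : ℝ)⁻¹ ≤ 1 - rfun p := by
    rw [le_sub_iff_add_le]
    nlinarith
  calc (1 - rfun p)⁻¹ ≤ ((16 : ℝ)⁻¹)⁻¹ := by
        apply inv_anti₀ (by norm_num) h2
    _ = 16 := by norm_num
  
lemma rfun_nonneg (n : ℕ) : 0 ≤ rfun n := Real.rpow_nonneg (Nat.cast_nonneg n) _

lemma rfun_norm_lt {p : ℕ} (hp : p.Prime) : ‖rfun p‖ < 1 := by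
  rw [Real.norm_eq_abs, abs_of_nonneg (rfun_nonneg p), rfun_apply]
  exact Real.rpow_lt_one_of_one_lt_of_neg (by exact_mod_cast hp.one_lt) (by norm_num)

lemma euler (N : ℕ) :
    Summable (fun m : Nat.smoothNumbers N => rfun m) ∧
      (∑' m : Nat.smoothNumbers N, rfun m) ≤ (16 : ℝ) ^ N := by
  obtain ⟨hs, hh⟩ := EulerProduct.summable_and_hasSum_smoothNumbers_prod_primesBelow_geometric
    (f := rfun) (fun {p} hp => rfun_norm_lt hp) N
  refine ⟨hh.summable, ?_⟩
  rw [hh.tsum_eq]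
  calc ∏ p ∈ N.primesBelow, (1 - rfun p)⁻¹
      ≤ ∏ p ∈ N.primesBelow, (16 : ℝ) := by
        apply Finset.prod_le_prod
        · intro p hp
          have hprime := Nat.prime_of_mem_primesBelow hp
          have h1 : rfun p ≤ 15/16 := by
            rw [rfun_apply]
            calc (p : ℝ) ^ (-(1/10) : ℝ) ≤ (2 : ℝ) ^ (-(1/10) : ℝ) :=
                Real.rpow_le_rpow_of_nonpos (by norm_num)
                  (by exact_mod_cast hprime.two_le) (by norm_num)
              _ ≤ 15/16 := two_rpow_le
          have h0 : (0:ℝ) < 1 - rfun p := by nlinarith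
          positivity
        · exact fun p hp => factor_le (Nat.prime_of_mem_primesBelow hp)
    _ = (16 : ℝ) ^ (N.primesBelow.card) := by rw [Finset.prod_const]
    _ ≤ (16 : ℝ) ^ N := by
        apply pow_le_pow_right₀ (by norm_num)
        exact le_trans (Finset.card_filter_le _ _) (by simp)

open ConfigAux in
lemma main_bound (z : ℝ) :
    Summable (fun σ : Config z => rfun (msig σ)) ∧
      (∑' σ : Config z, rfun (msig σ)) ≤ (64 : ℝ) ^ (⌊z⌋₊ + 1) := by
  set N : ℕ := ⌊z⌋₊ + 1 with hN
  set P : Finset ℕ := (Finset.Iic ⌊z⌋₊).filter Nat.Prime with hP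
  set S : Finset (Finset ℕ × Finset ℕ) := P.powerset ×ˢ P.powerset with hS
  set w : Finset ℕ × Finset ℕ → ℝ := fun q => if q ∈ S then 1 else 0 with hw
  set k : ℕ → ℝ := Set.indicator (Nat.smoothNumbers N) (fun m => rfun m) with hk
  set g : (Finset ℕ × Finset ℕ) × ℕ → ℝ := fun q => w q.1 * k q.2 with hg
  have hknonneg : ∀ m, 0 ≤ k m := fun m =>
    Set.indicator_nonneg (fun m _ => rfun_nonneg m) m
  have hwnonneg : ∀ q, 0 ≤ w q := by
    intro q; rw [hw]; dsimp only; split <;> norm_num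
  have hgnonneg : ∀ q, 0 ≤ g q := fun q => mul_nonneg (hwnonneg _) (hknonneg _)
  have hwsum : Summable w := summable_of_ne_finset_zero (s := S)
    (fun b hb => by rw [hw]; exact if_neg hb)
  have hwsum' : Summable (fun q => ‖w q‖) := summable_of_ne_finset_zero (s := S)
    (fun b hb => by rw [hw]; dsimp only; rw [if_neg hb, norm_zero])
  have hksub := (euler N).1
  have hksum : Summable k := summable_subtype_iff_indicator.mp hksub
  have hksum' : Summable (fun m => ‖k m‖) :=
    hksum.congr (fun m => (Real.norm_of_nonneg (hknonneg m)).symm)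
  have hgsum : Summable g := summable_mul_of_summable_norm hwsum' hksum'
  have htsumg : ∑' q, g q = (∑' q, w q) * (∑' m, k m) :=
    (tsum_mul_tsum_of_summable_norm hwsum' hksum').symm
  have hwval : ∑' q, w q = (S.card : ℝ) := by
    rw [tsum_eq_sum (s := S) (fun b hb => by rw [hw]; exact if_neg hb)]
    rw [Finset.sum_congr rfl (fun b hb => show w b = 1 from if_pos hb)]
    simp
  have hkval : ∑' m, k m ≤ (16 : ℝ) ^ N := by
    rw [← tsum_subtype]
    exact (euler N).2
  -- the injection
  have hι : ∀ σ : Config z, g ((σ.A, σ.B), msig σ) = rfun (msig σ) := by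
    intro σ
    have hA : σ.A ⊆ P := by
      rw [hP, ← σ.partition]
      exact (Finset.subset_union_left).trans Finset.subset_union_left
    have hB : σ.B ⊆ P := by
      rw [hP, ← σ.partition]
      exact (Finset.subset_union_right).trans Finset.subset_union_left
    have hmem : ((σ.A, σ.B)) ∈ S := by
      rw [hS, Finset.mem_product]
      exact ⟨Finset.mem_powerset.mpr hA, Finset.mem_powerset.mpr hB⟩
    rw [hg]
    dsimp only
    rw [hw]
    dsimp only
    rw [if_pos hmem, one_mul, hk, Set.indicator_of_mem (msig_smooth σ)]
  have hsum : Summable (fun σ : Config z => rfun (msig σ)) :=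
    (hgsum.comp_injective ConfigAux.inj).congr (fun σ => hι σ)
  refine ⟨hsum, ?_⟩
  have h1 : (∑' σ : Config z, rfun (msig σ)) ≤ ∑' q, g q :=
    Summable.tsum_le_tsum_of_inj _ ConfigAux.inj (fun c _ => hgnonneg c)
      (fun σ => (hι σ).ge) hsum hgsum
  have hcard : P.card ≤ N := by
    rw [hP, hN]
    exact le_trans (Finset.card_filter_le _ _) (by simp [Nat.card_Iic])
  have h2 : (S.card : ℝ) ≤ (4 : ℝ) ^ N := by
    rw [hS, Finset.card_product, Finset.card_powerset]
    push_cast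
    calc ((2:ℝ) ^ P.card) * 2 ^ P.card ≤ (2:ℝ) ^ N * 2 ^ N := by
          have := pow_le_pow_right₀ (a := (2:ℝ)) (by norm_num) hcard
          nlinarith [pow_pos (show (0:ℝ) < 2 by norm_num) P.card,
            pow_pos (show (0:ℝ) < 2 by norm_num) N]
      _ = (4:ℝ) ^ N := by rw [← mul_pow]; norm_num
  calc (∑' σ : Config z, rfun (msig σ)) ≤ ∑' q, g q := h1
    _ = (∑' q, w q) * (∑' m, k m) := htsumg
    _ ≤ (4:ℝ) ^ N * (16:ℝ) ^ N := by
        apply mul_le_mul (hwval ▸ h2) hkval (tsum_nonneg hknonneg) (by positivity)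
    _ = (64:ℝ) ^ N := by rw [← mul_pow]; norm_num

lemma subtype_bound (z : ℝ) (p : Config z → Prop) :
    Summable (fun σ : {τ : Config z // p τ} => rfun (msig σ.val)) ∧
      (∑' σ : {τ : Config z // p τ}, rfun (msig σ.val))
        ≤ ∑' σ : Config z, rfun (msig σ) := by
  have hsum := (main_bound z).1
  have h1 : Summable (fun σ : {τ : Config z // p τ} => rfun (msig σ.val)) :=
    hsum.comp_injective Subtype.val_injective
  exact ⟨h1, Summable.tsum_le_tsum_of_inj _ Subtype.val_injective
    (fun c _ => rfun_nonneg _) (fun σ => le_rfl) h1 hsum⟩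

theorem stmt_17 :
    ∃ C : ℝ, ∃ x₀ : ℝ, ∀ x : ℝ, x₀ ≤ x →
      x ^ (6/5 : ℝ) * Real.log (Real.log x) *
          (∑' σ : {τ : Config (Real.log x / 10) // ⌊x⌋₊ < msig τ},
            1/(msig (σ : Config (Real.log x / 10)) : ℝ))
        + x ^ (1/5 : ℝ) * Real.log (Real.log x) *
          (∑' _ : {τ : Config (Real.log x / 10) // msig τ ≤ ⌊x⌋₊}, (1:ℝ))
        ≤ C * x ^ (3/4 : ℝ) := by
  refine ⟨12800/3, 3, fun x hx => ?_⟩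
  have hx0 : (0:ℝ) < x := by linarith
  have hx1 : (1:ℝ) ≤ x := by linarith
  have hlx : (1:ℝ) ≤ Real.log x := by
    rw [show (1:ℝ) = Real.log (Real.exp 1) by rw [Real.log_exp]]
    apply Real.log_le_log (Real.exp_pos 1)
    linarith [Real.exp_one_lt_d9]
  have hlx0 : (0:ℝ) ≤ Real.log x := by linarith
  set z : ℝ := Real.log x / 10 with hzdef
  have hz0 : (0:ℝ) ≤ z := by positivity
  set L : ℝ := Real.log (Real.log x) with hL
  have hL0 : 0 ≤ L := Real.log_nonneg hlx
  set N : ℕ := ⌊z⌋₊ + 1 with hNdef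
  set T : ℝ := ∑' σ : Config z, rfun (msig σ) with hT
  have hT0 : 0 ≤ T := tsum_nonneg (fun σ => rfun_nonneg _)
  have hTle : T ≤ (64:ℝ) ^ N := (main_bound z).2
  -- first sum
  have hfirst : (∑' σ : {τ : Config z // ⌊x⌋₊ < msig τ},
      1/(msig (σ : Config z) : ℝ)) ≤ x ^ (-(9/10) : ℝ) * T := by
    obtain ⟨h1, h2⟩ := subtype_bound z (fun τ => ⌊x⌋₊ < msig τ)
    have hpt : ∀ σ : {τ : Config z // ⌊x⌋₊ < msig τ},
        1/(msig (σ : Config z) : ℝ) ≤ x ^ (-(9/10) : ℝ) * rfun (msig σ.val) := by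
      intro σ
      set m : ℝ := (msig σ.val : ℝ) with hm
      have hxm : x < m := by
        have h3 : ⌊x⌋₊ + 1 ≤ msig σ.val := σ.prop
        have h4 : ((⌊x⌋₊ : ℕ) : ℝ) + 1 ≤ m := by rw [hm]; exact_mod_cast h3
        have := Nat.lt_floor_add_one x
        linarith
      have hm0 : (0:ℝ) < m := by linarith
      rw [rfun_apply, Real.rpow_neg hx0.le, Real.rpow_neg (Nat.cast_nonneg _),
        ← hm, ← mul_inv, one_div]
      have hmono : x ^ ((9:ℝ)/10) * m ^ ((1:ℝ)/10) ≤ m := by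
        have hbase : x ^ ((9:ℝ)/10) ≤ m ^ ((9:ℝ)/10) :=
          Real.rpow_le_rpow hx0.le hxm.le (by norm_num)
        calc x ^ ((9:ℝ)/10) * m ^ ((1:ℝ)/10)
            ≤ m ^ ((9:ℝ)/10) * m ^ ((1:ℝ)/10) :=
              mul_le_mul_of_nonneg_right hbase (by positivity)
          _ = m := by rw [← Real.rpow_add hm0]; norm_num
      exact inv_anti₀ (by positivity) hmono
    have hS : Summable (fun σ : {τ : Config z // ⌊x⌋₊ < msig τ} =>
        1/(msig (σ : Config z) : ℝ)) := by
      apply Summable.of_nonneg_of_le (fun σ => by positivity) hpt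
      exact h1.mul_left _
    calc (∑' σ : {τ : Config z // ⌊x⌋₊ < msig τ}, 1/(msig (σ : Config z) : ℝ))
        ≤ ∑' σ : {τ : Config z // ⌊x⌋₊ < msig τ},
            x ^ (-(9/10) : ℝ) * rfun (msig σ.val) :=
          Summable.tsum_le_tsum hpt hS (h1.mul_left _)
      _ = x ^ (-(9/10) : ℝ) * ∑' σ : {τ : Config z // ⌊x⌋₊ < msig τ},
            rfun (msig σ.val) := tsum_mul_left
      _ ≤ x ^ (-(9/10) : ℝ) * T :=
          mul_le_mul_of_nonneg_left h2 (by positivity)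
  -- second sum
  have hsecond : (∑' _ : {τ : Config z // msig τ ≤ ⌊x⌋₊}, (1:ℝ))
      ≤ x ^ ((1:ℝ)/10) * T := by
    obtain ⟨h1, h2⟩ := subtype_bound z (fun τ => msig τ ≤ ⌊x⌋₊)
    have hpt : ∀ σ : {τ : Config z // msig τ ≤ ⌊x⌋₊},
        (1:ℝ) ≤ x ^ ((1:ℝ)/10) * rfun (msig σ.val) := by
      intro σ
      set m : ℝ := (msig σ.val : ℝ) with hm
      have hm1 : (1:ℝ) ≤ m := by
        have : 1 ≤ msig σ.val := ConfigAux.msig_pos σ.val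
        rw [hm]; exact_mod_cast this
      have hmx : m ≤ x := by
        have h3 : (msig σ.val : ℝ) ≤ (⌊x⌋₊ : ℝ) := by exact_mod_cast σ.prop
        have := Nat.floor_le hx0.le
        linarith
      rw [rfun_apply, Real.rpow_neg (Nat.cast_nonneg _), ← hm,
        ← div_eq_mul_inv, le_div_iff₀ (by positivity), one_mul]
      exact Real.rpow_le_rpow (by linarith) hmx (by norm_num)
    have hS : Summable (fun _ : {τ : Config z // msig τ ≤ ⌊x⌋₊} => (1:ℝ)) := by
      apply Summable.of_nonneg_of_le (fun σ => by norm_num) hpt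
      exact h1.mul_left _
    calc (∑' _ : {τ : Config z // msig τ ≤ ⌊x⌋₊}, (1:ℝ))
        ≤ ∑' σ : {τ : Config z // msig τ ≤ ⌊x⌋₊},
            x ^ ((1:ℝ)/10) * rfun (msig σ.val) :=
          Summable.tsum_le_tsum hpt hS (h1.mul_left _)
      _ = x ^ ((1:ℝ)/10) * ∑' σ : {τ : Config z // msig τ ≤ ⌊x⌋₊},
            rfun (msig σ.val) := tsum_mul_left
      _ ≤ x ^ ((1:ℝ)/10) * T := mul_le_mul_of_nonneg_left h2 (by positivity)
  -- bound (64:ℝ)^N ≤ 64 * x ^ (21/50)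
  have h64 : (64:ℝ) ^ N ≤ 64 * x ^ ((21:ℝ)/50) := by
    have hfloor : ((⌊z⌋₊ : ℕ) : ℝ) ≤ z := Nat.floor_le hz0
    have e1 : (64:ℝ) ^ N = (64:ℝ) ^ (⌊z⌋₊ : ℕ) * 64 := by rw [hNdef, pow_succ]
    have e2 : (64:ℝ) ^ (⌊z⌋₊ : ℕ) ≤ (64:ℝ) ^ (z : ℝ) := by
      rw [← Real.rpow_natCast (64:ℝ) ⌊z⌋₊]
      exact Real.rpow_le_rpow_of_exponent_le (by norm_num) hfloor
    have e3 : (64:ℝ) ^ (z : ℝ) ≤ x ^ ((21:ℝ)/50) := by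
      rw [Real.rpow_def_of_pos (by norm_num : (0:ℝ) < 64),
        Real.rpow_def_of_pos hx0]
      apply Real.exp_le_exp.mpr
      have hlog64 : Real.log 64 = 6 * Real.log 2 := by
        rw [show (64:ℝ) = 2 ^ (6:ℕ) by norm_num, Real.log_pow]
        push_cast; ring
      have h2lt := Real.log_two_lt_d9
      rw [hlog64, hzdef]
      nlinarith
    calc (64:ℝ) ^ N = (64:ℝ) ^ (⌊z⌋₊ : ℕ) * 64 := e1
      _ ≤ x ^ ((21:ℝ)/50) * 64 :=
          mul_le_mul_of_nonneg_right (e2.trans e3) (by norm_num)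
      _ = 64 * x ^ ((21:ℝ)/50) := by ring
  -- bound L ≤ (100/3) * x ^ (3/100)
  have hLb : L ≤ (100/3) * x ^ ((3:ℝ)/100) := by
    have h1 : L ≤ Real.log x := Real.log_le_self hlx0
    have h2 : Real.log x ≤ x ^ ((3:ℝ)/100) / ((3:ℝ)/100) :=
      Real.log_le_rpow_div hx0.le (by norm_num)
    calc L ≤ x ^ ((3:ℝ)/100) / ((3:ℝ)/100) := h1.trans h2
      _ = (100/3) * x ^ ((3:ℝ)/100) := by ring
  -- combine
  have key : x ^ (6/5 : ℝ) * L * (x ^ (-(9/10) : ℝ) * T)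
      + x ^ (1/5 : ℝ) * L * (x ^ ((1:ℝ)/10) * T)
      = 2 * L * T * x ^ ((3:ℝ)/10) := by
    rw [show x ^ (6/5 : ℝ) * L * (x ^ (-(9/10) : ℝ) * T)
        = L * T * (x ^ (6/5 : ℝ) * x ^ (-(9/10) : ℝ)) by ring,
      show x ^ (1/5 : ℝ) * L * (x ^ ((1:ℝ)/10) * T)
        = L * T * (x ^ (1/5 : ℝ) * x ^ ((1:ℝ)/10)) by ring,
      ← Real.rpow_add hx0, ← Real.rpow_add hx0]
    norm_num
    ring
  calc x ^ (6/5 : ℝ) * L * (∑' σ : {τ : Config z // ⌊x⌋₊ < msig τ},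
          1/(msig (σ : Config z) : ℝ))
        + x ^ (1/5 : ℝ) * L * (∑' _ : {τ : Config z // msig τ ≤ ⌊x⌋₊}, (1:ℝ))
      ≤ x ^ (6/5 : ℝ) * L * (x ^ (-(9/10) : ℝ) * T)
        + x ^ (1/5 : ℝ) * L * (x ^ ((1:ℝ)/10) * T) := by
        apply add_le_add
        · exact mul_le_mul_of_nonneg_left hfirst (by positivity)
        · exact mul_le_mul_of_nonneg_left hsecond (by positivity)
    _ = 2 * L * T * x ^ ((3:ℝ)/10) := key
    _ ≤ 2 * L * ((64:ℝ) ^ N) * x ^ ((3:ℝ)/10) := by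
        apply mul_le_mul_of_nonneg_right _ (by positivity)
        apply mul_le_mul_of_nonneg_left hTle (by positivity)
    _ ≤ 2 * L * (64 * x ^ ((21:ℝ)/50)) * x ^ ((3:ℝ)/10) := by
        apply mul_le_mul_of_nonneg_right _ (by positivity)
        apply mul_le_mul_of_nonneg_left h64 (by positivity)
    _ = 128 * L * (x ^ ((21:ℝ)/50) * x ^ ((3:ℝ)/10)) := by ring
    _ = 128 * L * x ^ ((18:ℝ)/25) := by
        rw [← Real.rpow_add hx0]; norm_num
    _ ≤ 128 * ((100/3) * x ^ ((3:ℝ)/100)) * x ^ ((18:ℝ)/25) := by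
        apply mul_le_mul_of_nonneg_right _ (by positivity)
        apply mul_le_mul_of_nonneg_left hLb (by norm_num)
    _ = (12800/3) * (x ^ ((3:ℝ)/100) * x ^ ((18:ℝ)/25)) := by ring
    _ = 12800/3 * x ^ (3/4 : ℝ) := by
        rw [← Real.rpow_add hx0]; norm_num
end
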